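/- Let (X,κ) be a digital image. Then X is κ-connected if and only if K(X,κ') is κ'-connected. -/

import Mathlib

/-- `a` and `b` are adjacent or equal ("⟷≤") with respect to adjacency relation `α`. -/
def AdjEq {A : Type*} (α : A → A → Prop) (a b : A) : Prop := α a b ∨ a = b

/-- `f : (X,κ) → (Y,lam)` is digitally continuous: adjacency is sent to
adjacency-or-equality. -/
def DigCont {X Y : Type*} (κ : X → X → Prop) (lam : Y → Y → Prop) (f : X → Y) : Prop :=
  ∀ x x', κ x x' → AdjEq lam (f x) (f x')

/-- Continuity of `f` relative to carrier sets: `f` maps `S` into `T` and sends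
`α`-adjacent elements of `S` to `β`-adjacent-or-equal elements. -/
def ContOn {A B : Type*} (α : A → A → Prop) (β : B → B → Prop)
    (S : Set A) (T : Set B) (f : A → B) : Prop :=
  (∀ a ∈ S, f a ∈ T) ∧ ∀ a ∈ S, ∀ a' ∈ S, α a a' → AdjEq β (f a) (f a')

/-- The hyperspace adjacency `κ'`: distinct `A, B` are adjacent iff every point of `A`
is adjacent-or-equal to some point of `B` and vice versa. -/
def HyperAdj {X : Type*} (κ : X → X → Prop) (A B : Finset X) : Prop :=
  A ≠ B ∧ (∀ a ∈ A, ∃ b ∈ B, AdjEq κ a b) ∧ ∀ b ∈ B, ∃ a ∈ A, AdjEq κ b a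

/-- A subset `S` is connected w.r.t. adjacency `α`: any two of its points are joined by
a path (finite sequence of consecutively adjacent-or-equal points) lying in `S`. -/
def ConnIn {A : Type*} (α : A → A → Prop) (S : Set A) : Prop :=
  ∀ a ∈ S, ∀ b ∈ S, ∃ (n : ℕ) (p : ℕ → A), p 0 = a ∧ p n = b ∧
    (∀ i ≤ n, p i ∈ S) ∧ ∀ i < n, AdjEq α (p i) (p (i + 1))

/-- `a` and `b` are joined by a path lying in `S` (i.e. they are in the same
connected component of the graph induced on `S`). -/
def Chain {A : Type*} (α : A → A → Prop) (S : Set A) (a b : A) : Prop :=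
  ∃ (n : ℕ) (p : ℕ → A), p 0 = a ∧ p n = b ∧
    (∀ i ≤ n, p i ∈ S) ∧ ∀ i < n, AdjEq α (p i) (p (i + 1))

/-- The carrier of the hyperspace `2^X`: nonempty finite subsets of `X`. -/
def TwoX (X : Type*) : Set (Finset X) := {A | A.Nonempty}

/-- The carrier of `K(X,κ')`: nonempty finite κ-connected subsets of `X`. -/
def KSet {X : Type*} (κ : X → X → Prop) : Set (Finset X) :=
  {A | A.Nonempty ∧ ConnIn κ (A : Set X)}

/-- A digital homotopy from `f` to `g`, relative to carriers `S`, `T`: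
a function `F : S × [0,m] → T` with `F(·,0) = f`, `F(·,m) = g`, all tracks
`t ↦ F(a,t)` are paths, and all time slices `a ↦ F(a,t)` are continuous. -/
def HtpyOn {A B : Type*} (α : A → A → Prop) (β : B → B → Prop)
    (S : Set A) (T : Set B) (f g : A → B) : Prop :=
  ∃ (m : ℕ) (F : A → ℕ → B),
    (∀ a ∈ S, ∀ t ≤ m, F a t ∈ T) ∧
    (∀ a ∈ S, F a 0 = f a) ∧ (∀ a ∈ S, F a m = g a) ∧
    (∀ a ∈ S, ∀ t < m, AdjEq β (F a t) (F a (t + 1))) ∧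
    (∀ t ≤ m, ∀ a ∈ S, ∀ a' ∈ S, α a a' → AdjEq β (F a t) (F a' t))

/-- A digital homotopy from `f` to `g` in exactly `m` steps (on full types). -/
def HtpyN {X Y : Type*} (κ : X → X → Prop) (lam : Y → Y → Prop)
    (f g : X → Y) (m : ℕ) : Prop :=
  ∃ F : X → ℕ → Y,
    (∀ x, F x 0 = f x) ∧ (∀ x, F x m = g x) ∧
    (∀ x, ∀ t < m, AdjEq lam (F x t) (F x (t + 1))) ∧
    (∀ t ≤ m, DigCont κ lam fun x => F x t)

/-- `f` and `g` are digitally homotopic. -/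
def Htpy {X Y : Type*} (κ : X → X → Prop) (lam : Y → Y → Prop) (f g : X → Y) : Prop :=
  ∃ m, HtpyN κ lam f g m

/-- The graphs on carriers `S` and `T` have the same homotopy type. -/
def HtpyEquivOn {A B : Type*} (α : A → A → Prop) (β : B → B → Prop)
    (S : Set A) (T : Set B) : Prop :=
  ∃ (f : A → B) (g : B → A),
    ContOn α β S T f ∧ ContOn β α T S g ∧
    HtpyOn α α S S (g ∘ f) id ∧ HtpyOn β β T T (f ∘ g) id

/-- The graph on carrier `S` is contractible: the identity is homotopic to a constant. -/
def ContractibleOn {A : Type*} (α : A → A → Prop) (S : Set A) : Prop :=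
  ∃ c ∈ S, HtpyOn α α S S id fun _ => c

/-- `Φ`-adjacency of functions: `f ≠ g` and `f(x) ⟷≤ g(x)` for all `x`. -/
def PhiAdj {X Y : Type*} (lam : Y → Y → Prop) (f g : X → Y) : Prop :=
  f ≠ g ∧ ∀ x, AdjEq lam (f x) (g x)

/-- `Ψ`-adjacency of functions: `f ≠ g` and `x₀ ⟷≤ x₁` implies `f(x₀) ⟷≤ g(x₁)`. -/
def PsiAdj {X Y : Type*} (κ : X → X → Prop) (lam : Y → Y → Prop) (f g : X → Y) : Prop :=
  f ≠ g ∧ ∀ x₀ x₁, AdjEq κ x₀ x₁ → AdjEq lam (f x₀) (g x₁)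

/-- `C` is a connected component of the graph induced on the vertex set `V`:
a maximal connected subset of `V`. -/
def IsComponentIn {A : Type*} (α : A → A → Prop) (V C : Set A) : Prop :=
  C ⊆ V ∧ ConnIn α C ∧ ∀ C' : Set A, C' ⊆ V → ConnIn α C' → C ⊆ C' → C' = C


/-!
Growing a connected set by one adjacent point is a single step in `K(X,κ')`, so every
`S ∈ K(X,κ')` is joined to each singleton `{s}` with `s ∈ S`; a κ-path `x₀, …, xₙ` gives the
path of singletons `{x₀}, …, {xₙ}`. Conversely, along a κ'-path from `{x}` to `{y}` every point
of each set is κ-joined to `x`, since it is adjacent-or-equal to a point of the previous set.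
-/

lemma AdjEq.symm {A : Type*} {α : A → A → Prop} (hs : ∀ x y, α x y → α y x) {a b : A}
    (h : AdjEq α a b) : AdjEq α b a :=
  h.imp (hs _ _) Eq.symm

namespace Chain

variable {A : Type*} {α : A → A → Prop} {S T : Set A} {a b c : A}

lemma refl (ha : a ∈ S) : Chain α S a a :=
  ⟨0, fun _ => a, rfl, rfl, fun _ _ => ha, fun _ hi => absurd hi (Nat.not_lt_zero _)⟩

lemma mono (hST : S ⊆ T) (h : Chain α S a b) : Chain α T a b := by
  obtain ⟨n, p, h0, hn, hmem, hadj⟩ := h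
  exact ⟨n, p, h0, hn, fun i hi => hST (hmem i hi), hadj⟩

lemma step (h : Chain α S a b) (hc : c ∈ S) (hbc : AdjEq α b c) : Chain α S a c := by
  obtain ⟨n, p, h0, hn, hmem, hadj⟩ := h
  refine ⟨n + 1, fun i => if i ≤ n then p i else c, by simpa using h0, by simp, ?_, ?_⟩
  · intro i _
    dsimp only
    split_ifs with hin
    · exact hmem i hin
    · exact hc
  · intro i hi
    rcases Nat.lt_or_eq_of_le (Nat.le_of_lt_succ hi) with hin | rfl
    · simpa [hin.le, Nat.succ_le_of_lt hin] using hadj i hin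
    · simpa [hn] using hbc

lemma induction_on {P : A → Prop} (h : Chain α S a b) (ha : P a)
    (hstep : ∀ x y, x ∈ S → y ∈ S → α x y → P x → P y) : P b := by
  obtain ⟨n, p, rfl, rfl, hmem, hadj⟩ := h
  suffices ∀ i ≤ n, P (p i) from this n le_rfl
  intro i
  induction i with
  | zero => exact fun _ => ha
  | succ i ih =>
    intro hi
    rcases hadj i hi with hα | heq
    · exact hstep _ _ (hmem i (by omega)) (hmem _ hi) hα (ih (by omega))
    · exact heq ▸ ih (by omega)

lemma trans (h₁ : Chain α S a b) (h₂ : Chain α S b c) : Chain α S a c :=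
  h₂.induction_on h₁ fun _ _ _ hy hxy hx => hx.step hy (Or.inl hxy)

lemma symm (hs : ∀ x y, α x y → α y x) (h : Chain α S a b) : Chain α S b a := by
  obtain ⟨n, p, h0, hn, hmem, hadj⟩ := h
  refine ⟨n, fun i => p (n - i), by simpa using hn, by simpa using h0,
    fun i _ => hmem _ (by omega), fun i hi => ?_⟩
  show AdjEq α (p (n - i)) (p (n - (i + 1)))
  rw [show n - i = n - (i + 1) + 1 by omega]
  exact (hadj _ (by omega)).symm hs

lemma map {B : Type*} {β : B → B → Prop} {U : Set B} {f : A → B}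
    (hf : ∀ x ∈ S, f x ∈ U) (hcont : DigCont α β f) (h : Chain α S a b) :
    Chain β U (f a) (f b) := by
  obtain ⟨n, p, h0, hn, hmem, hadj⟩ := h
  refine ⟨n, f ∘ p, by simp [h0], by simp [hn], fun i hi => hf _ (hmem i hi), fun i hi => ?_⟩
  rcases hadj i hi with hα | heq
  · exact hcont _ _ hα
  · exact Or.inr (congrArg f heq)

lemma exists_adj_boundary (h : Chain α S a b) (ha : a ∈ T) (hb : b ∉ T) :
    ∃ u ∈ T, ∃ x ∈ S, x ∉ T ∧ α u x := by
  by_contra! hclosed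
  exact hb (h.induction_on ha fun x y _ hy hxy hx =>
    by_contra fun hyT => hclosed x hx y hy hyT hxy)

end Chain

section Connected

variable {A : Type*} {α : A → A → Prop} {S : Set A}

lemma connIn_of_forall_chain (hs : ∀ x y, α x y → α y x) {c : A}
    (h : ∀ a ∈ S, Chain α S c a) : ConnIn α S :=
  fun a ha b hb => ((h a ha).symm hs).trans (h b hb)

lemma ConnIn.insert (hs : ∀ x y, α x y → α y x) (hS : ConnIn α S) {s x : A} (hsS : s ∈ S)
    (hxs : AdjEq α x s) : ConnIn α (insert x S) := by
  refine connIn_of_forall_chain hs (c := s) fun a ha => ?_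
  rcases ha with rfl | ha
  · exact (Chain.refl (Set.mem_insert_of_mem _ hsS)).step (Set.mem_insert _ _) (hxs.symm hs)
  · exact Chain.mono (Set.subset_insert _ _) (hS s hsS a ha)

end Connected

section Hyperspace

variable {X : Type*} {κ : X → X → Prop}

lemma HyperAdj.symm {P Q : Finset X} (h : HyperAdj κ P Q) : HyperAdj κ Q P :=
  ⟨h.1.symm, h.2.2, h.2.1⟩

lemma singleton_mem_kSet (x : X) : ({x} : Finset X) ∈ KSet κ := by
  refine ⟨Finset.singleton_nonempty x, fun u hu v hv => ?_⟩
  rw [Finset.coe_singleton, Set.mem_singleton_iff] at hu hv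
  subst hu hv
  exact Chain.refl (by simp)

lemma digCont_singleton (hs : ∀ x y, κ x y → κ y x) :
    DigCont κ (HyperAdj κ) (fun x : X => {x}) := by
  intro x y hxy
  by_cases heq : x = y
  · exact Or.inr (congrArg _ heq)
  · refine Or.inl ⟨by simpa using heq, ?_, ?_⟩ <;> simp [AdjEq, hxy, hs _ _ hxy]

variable [DecidableEq X]

lemma hyperAdj_insert (hs : ∀ x y, κ x y → κ y x) {T : Finset X} {u x : X} (huT : u ∈ T)
    (hxT : x ∉ T) (hux : κ u x) : HyperAdj κ T (insert x T) := by
  refine ⟨fun h => hxT (h ▸ Finset.mem_insert_self x T),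
    fun a ha => ⟨a, Finset.mem_insert_of_mem ha, Or.inr rfl⟩, fun b hb => ?_⟩
  rcases Finset.mem_insert.mp hb with rfl | hb
  · exact ⟨u, huT, Or.inl (hs _ _ hux)⟩
  · exact ⟨b, hb, Or.inr rfl⟩

lemma chain_kSet_of_subset (hs : ∀ x y, κ x y → κ y x) {S T : Finset X}
    (hS : ConnIn κ (S : Set X)) (hT : T ∈ KSet κ) (hTS : T ⊆ S) :
    Chain (HyperAdj κ) (KSet κ) T S := by
  by_cases hST : S ⊆ T
  · obtain rfl := Finset.Subset.antisymm hTS hST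
    exact Chain.refl hT
  obtain ⟨t, ht⟩ := hT.1
  obtain ⟨y, hyS, hyT⟩ := Finset.not_subset.mp hST
  obtain ⟨u, huT, x, hxS, hxT, hux⟩ :=
    Chain.exists_adj_boundary (T := T) (hS t (hTS ht) y hyS) ht hyT
  have hT' : insert x T ∈ KSet κ :=
    ⟨Finset.insert_nonempty x T, by
      simpa using hT.2.insert hs (Finset.mem_coe.mpr huT) (Or.inl (hs _ _ hux))⟩
  have : (S \ insert x T).card < (S \ T).card := by
    rw [Finset.sdiff_insert]
    exact Finset.card_erase_lt_of_mem (Finset.mem_sdiff.mpr ⟨hxS, hxT⟩)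
  exact ((Chain.refl hT).step hT' (Or.inl (hyperAdj_insert hs huT hxT hux))).trans
    (chain_kSet_of_subset hs hS hT' (Finset.insert_subset hxS hTS))
termination_by (S \ T).card

lemma chain_singleton_of_mem_kSet (hs : ∀ x y, κ x y → κ y x) {S : Finset X}
    (hS : S ∈ KSet κ) {s : X} (hs' : s ∈ S) : Chain (HyperAdj κ) (KSet κ) {s} S :=
  chain_kSet_of_subset hs hS.2 (singleton_mem_kSet s) (Finset.singleton_subset_iff.mpr hs')

end Hyperspace

lemma Chain.exists_chain_of_hyperAdj {X : Type*} {κ : X → X → Prop}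
    (hs : ∀ x y, κ x y → κ y x) {U : Set (Finset X)} {P Q : Finset X}
    (h : Chain (HyperAdj κ) U P Q) : ∀ z ∈ Q, ∃ a ∈ P, Chain κ Set.univ a z :=
  h.induction_on (P := fun R => ∀ z ∈ R, ∃ a ∈ P, Chain κ Set.univ a z)
    (fun z hz => ⟨z, hz, Chain.refl trivial⟩) fun _ _ _ _ hadj hreach z hz => by
      obtain ⟨w, hw, hzw⟩ := hadj.2.2 z hz
      obtain ⟨a, ha, haw⟩ := hreach w hw
      exact ⟨a, ha, haw.step trivial (hzw.symm hs)⟩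

theorem stmt15_general {X : Type*}
    (κ : X → X → Prop)
    (hκsymm : ∀ x y, κ x y → κ y x) :
    ConnIn κ (Set.univ : Set X) ↔ ConnIn (HyperAdj κ) (KSet κ) := by
  classical
  constructor
  · intro hX A hA B hB
    obtain ⟨a, ha⟩ := hA.1
    obtain ⟨b, hb⟩ := hB.1
    have hab : Chain (HyperAdj κ) (KSet κ) {a} {b} :=
      Chain.map (fun x _ => singleton_mem_kSet x) (digCont_singleton hκsymm)
        (hX a trivial b trivial)
    exact (((chain_singleton_of_mem_kSet hκsymm hA ha).symm fun _ _ => HyperAdj.symm).trans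
      hab).trans (chain_singleton_of_mem_kSet hκsymm hB hb)
  · intro hK x _ y _
    obtain ⟨a, ha, hay⟩ := Chain.exists_chain_of_hyperAdj hκsymm
      (hK {x} (singleton_mem_kSet x) {y} (singleton_mem_kSet y)) y (Finset.mem_singleton_self y)
    rw [Finset.mem_singleton.mp ha] at hay
    exact hay

/-- `X` is `κ`-connected iff `K(X,κ')` is `κ'`-connected. -/
theorem stmt15 {X : Type*}
    (κ : X → X → Prop)
    (hκsymm : ∀ x y, κ x y → κ y x) (hκirr : ∀ x, ¬ κ x x) :
    ConnIn κ (Set.univ : Set X) ↔ ConnIn (HyperAdj κ) (KSet κ) :=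
  stmt15_general κ hκsymm
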